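/- arXiv:2206.09164 — 10 statements merged into one kernel-verified Lean document; each statement's English description precedes it below -/
import Mathlib

section
/- Suppose u : [0,1] × [0,1] → ℝ is continuous with continuous partial derivative u_a in the first argument, and suppose there exists a differentiable function g : [0,1] → (0,∞) such that the function ũ(a,θ) = u(a,θ)/g(a) satisfies ∂ũ/∂a (a,θ) < 0 for all (a,θ). Then u satisfies strict aggregate quasi-concavity: for every Borel probability measure μ on [0,1] and every a ∈ [0,1], if ∫ u(a,θ) dμ(θ) = 0 then ∫ u_a(a,θ) dμ(θ) < 0. -/
open MeasureTheory

lemma aux_integrable (μ : Measure ℝ) [IsProbabilityMeasure μ]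
    (hμc : μ (Set.Icc (0:ℝ) 1)ᶜ = 0)
    (F : ℝ → ℝ) (hF : Continuous F) : Integrable F μ := by
  obtain ⟨C, hC⟩ : ∃ C, ∀ x ∈ Set.Icc (0:ℝ) 1, |F x| ≤ C := by
    obtain ⟨x₀, _, hx₀⟩ := isCompact_Icc.exists_isMaxOn (s := Set.Icc (0:ℝ) 1)
      ⟨0, by norm_num⟩ (hF.abs.continuousOn)
    exact ⟨|F x₀|, hx₀⟩
  refine (integrable_const C).mono' hF.aestronglyMeasurable ?_
  filter_upwards [MeasureTheory.measure_eq_zero_iff_ae_notMem.mp hμc] with x hx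
  simpa using hC x (by simpa using hx)

/-- If `u(a,θ)/g(a)` has strictly negative partial derivative in `a` for some positive
differentiable `g`, then `u` satisfies strict aggregate quasi-concavity. -/
theorem stmt_1 (u ua : ℝ → ℝ → ℝ)
    (hu : Continuous fun p : ℝ × ℝ => u p.1 p.2)
    (hua : Continuous fun p : ℝ × ℝ => ua p.1 p.2)
    (hderiv : ∀ a ∈ Set.Icc (0:ℝ) 1, ∀ θ ∈ Set.Icc (0:ℝ) 1,
      HasDerivAt (fun a' => u a' θ) (ua a θ) a)
    (g : ℝ → ℝ)
    (hgdiff : ∀ a ∈ Set.Icc (0:ℝ) 1, DifferentiableAt ℝ g a)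
    (hgpos : ∀ a ∈ Set.Icc (0:ℝ) 1, 0 < g a)
    (htilde : ∀ a ∈ Set.Icc (0:ℝ) 1, ∀ θ ∈ Set.Icc (0:ℝ) 1,
      deriv (fun a' => u a' θ / g a') a < 0)
    (μ : Measure ℝ) [IsProbabilityMeasure μ] (hμ : μ (Set.Icc (0:ℝ) 1) = 1)
    (a : ℝ) (ha : a ∈ Set.Icc (0:ℝ) 1)
    (hzero : ∫ θ, u a θ ∂μ = 0) :
    ∫ θ, ua a θ ∂μ < 0 := by
  have hμc : μ (Set.Icc (0:ℝ) 1)ᶜ = 0 := by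
    have := measure_compl (measurableSet_Icc (a := (0:ℝ)) (b := 1)) (measure_ne_top μ _)
    simp [hμ, this]
  set c : ℝ := deriv g a with hc
  have hga : 0 < g a := hgpos a ha
  -- pointwise strict inequality on Icc
  have key : ∀ θ ∈ Set.Icc (0:ℝ) 1, 0 < u a θ * (c / g a) - ua a θ := by
    intro θ hθ
    have hd : HasDerivAt (fun a' => u a' θ / g a')
        ((ua a θ * g a - u a θ * deriv g a) / (g a) ^ 2) a :=
      (hderiv a ha θ hθ).div ((hgdiff a ha).hasDerivAt) hga.ne'
    have h1 : (ua a θ * g a - u a θ * deriv g a) / (g a) ^ 2 < 0 := by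
      rw [← hd.deriv]; exact htilde a ha θ hθ
    have h2 : ua a θ * g a - u a θ * deriv g a < 0 := by
      have := mul_neg_of_neg_of_pos h1 (pow_pos hga 2)
      rwa [div_mul_cancel₀ _ (pow_pos hga 2).ne'] at this
    have : ua a θ < u a θ * (c / g a) := by
      rw [mul_div_assoc', lt_div_iff₀ hga]; linarith
    linarith
  -- continuous functions of θ
  have hcu : Continuous fun θ => u a θ :=
    hu.comp (Continuous.prodMk_right a)
  have hcua : Continuous fun θ => ua a θ :=
    hua.comp (Continuous.prodMk_right a)
  set f : ℝ → ℝ := fun θ => u a θ * (c / g a) - ua a θ with hf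
  have hcf : Continuous f := (hcu.mul continuous_const).sub hcua
  -- a positive lower bound on Icc
  obtain ⟨θ₀, hθ₀, hθ₀min⟩ := isCompact_Icc.exists_isMinOn (s := Set.Icc (0:ℝ) 1)
    ⟨0, by norm_num⟩ hcf.continuousOn
  set ε : ℝ := f θ₀ with hε
  have hεpos : 0 < ε := key θ₀ hθ₀
  -- integrals
  have hIu : Integrable (fun θ => u a θ) μ := aux_integrable μ hμc _ hcu
  have hIua : Integrable (fun θ => ua a θ) μ := aux_integrable μ hμc _ hcua
  have hIf : Integrable f μ := aux_integrable μ hμc _ hcf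
  have hεint : ∫ θ, f θ ∂μ ≥ ε := by
    have hind : Integrable (Set.indicator (Set.Icc (0:ℝ) 1) (fun _ => ε)) μ :=
      (integrable_const ε).indicator measurableSet_Icc
    have hmono : ∫ θ, Set.indicator (Set.Icc (0:ℝ) 1) (fun _ => ε) θ ∂μ ≤ ∫ θ, f θ ∂μ := by
      refine integral_mono_ae hind hIf ?_
      filter_upwards [MeasureTheory.measure_eq_zero_iff_ae_notMem.mp hμc] with x hx
      have hx' : x ∈ Set.Icc (0:ℝ) 1 := by simpa using hx
      simpa [Set.indicator_of_mem hx'] using hθ₀min hx'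
    have : ∫ θ, Set.indicator (Set.Icc (0:ℝ) 1) (fun _ => ε) θ ∂μ = ε := by
      rw [integral_indicator_const _ measurableSet_Icc]
      simp [Measure.real, hμ]
    linarith
  have hsplit : ∫ θ, ua a θ ∂μ = (∫ θ, u a θ ∂μ) * (c / g a) - ∫ θ, f θ ∂μ := by
    rw [integral_sub (hIu.mul_const _) hIua, integral_mul_const]
    ring
  rw [hsplit, hzero]
  linarith
end

section
/- Let u : [0,1] × [0,1] → ℝ satisfy the pairwise signed-ratio conditions: for all a, θ, θ': u(a,θ) = 0 implies u_a(a,θ) < 0, and u(a,θ) < 0 < u(a,θ') implies u(a,θ') u_a(a,θ) − u(a,θ) u_a(a,θ') < 0. Then for all a ∈ [0,1], all θ, θ' ∈ [0,1], and all ρ ∈ [0,1]: if ρ·u(a,θ) + (1−ρ)·u(a,θ') = 0 then ρ·u_a(a,θ) + (1−ρ)·u_a(a,θ') < 0. -/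
/-!
At an endpoint ρ ∈ {0, 1} the claim is the first condition. For interior ρ, the values
`x = u a θ` and `y = u a θ'` of a vanishing combination are either both zero, and then both
derivatives are negative, or of strictly opposite signs. In the latter case, with `y > 0`, the
identity `y (ρ p + σ q) = ρ (y p - x q) + q (ρ x + σ y)` reduces the sign of the combination
`ρ p + σ q` of the derivatives to the sign of the signed ratio `y p - x q`.
-/

theorem mul_add_mul_neg_of_mul_sub_mul_neg {x y p q ρ σ : ℝ} (hρ : 0 < ρ) (hy : 0 < y)
    (hsum : ρ * x + σ * y = 0) (hratio : y * p - x * q < 0) : ρ * p + σ * q < 0 := by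
  have key : y * (ρ * p + σ * q) = ρ * (y * p - x * q) + q * (ρ * x + σ * y) := by ring
  rw [hsum, mul_zero, add_zero] at key
  exact neg_of_mul_neg_right (key ▸ mul_neg_of_pos_of_neg hρ hratio) hy.le

theorem convex_comb_neg_of_signed_ratio_neg {x y p q ρ : ℝ} (hρ : ρ ∈ Set.Icc (0 : ℝ) 1)
    (hx : x = 0 → p < 0) (hy : y = 0 → q < 0)
    (hxy : x < 0 → 0 < y → y * p - x * q < 0) (hyx : y < 0 → 0 < x → x * q - y * p < 0)
    (hsum : ρ * x + (1 - ρ) * y = 0) : ρ * p + (1 - ρ) * q < 0 := by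
  obtain ⟨hρ0, hρ1⟩ := hρ
  rcases hρ0.eq_or_lt with rfl | hρ0
  · simp only [zero_mul, sub_zero, one_mul, zero_add] at hsum ⊢
    exact hy hsum
  rcases hρ1.eq_or_lt with rfl | hρ1
  · simp only [one_mul, sub_self, zero_mul, add_zero] at hsum ⊢
    exact hx hsum
  have hσ : 0 < 1 - ρ := sub_pos.mpr hρ1
  rcases lt_trichotomy x 0 with hxneg | rfl | hxpos
  · have hypos : 0 < y := pos_of_mul_pos_right (by linarith [mul_neg_of_pos_of_neg hρ0 hxneg]) hσ.le
    exact mul_add_mul_neg_of_mul_sub_mul_neg hρ0 hypos hsum (hxy hxneg hypos)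
  · have hy0 : y = 0 := by simpa [hσ.ne'] using hsum
    nlinarith [hx rfl, hy hy0]
  · have hyneg : y < 0 := neg_of_mul_neg_right (by linarith [mul_pos hρ0 hxpos]) hσ.le
    rw [add_comm] at hsum ⊢
    exact mul_add_mul_neg_of_mul_sub_mul_neg hσ hxpos hsum (hyx hyneg hxpos)

/-- The pairwise signed-ratio conditions imply the two-point case of strict aggregate
quasi-concavity. -/
theorem stmt_3 (u ua : ℝ → ℝ → ℝ)
    (h1 : ∀ a ∈ Set.Icc (0:ℝ) 1, ∀ θ ∈ Set.Icc (0:ℝ) 1, u a θ = 0 → ua a θ < 0)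
    (h2 : ∀ a ∈ Set.Icc (0:ℝ) 1, ∀ θ ∈ Set.Icc (0:ℝ) 1, ∀ θ' ∈ Set.Icc (0:ℝ) 1,
      u a θ < 0 → 0 < u a θ' → u a θ' * ua a θ - u a θ * ua a θ' < 0) :
    ∀ a ∈ Set.Icc (0:ℝ) 1, ∀ θ ∈ Set.Icc (0:ℝ) 1, ∀ θ' ∈ Set.Icc (0:ℝ) 1,
      ∀ ρ ∈ Set.Icc (0:ℝ) 1,
        ρ * u a θ + (1 - ρ) * u a θ' = 0 →
        ρ * ua a θ + (1 - ρ) * ua a θ' < 0 := by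
  intro a ha θ hθ θ' hθ' ρ hρ
  exact convex_comb_neg_of_signed_ratio_neg hρ (h1 a ha θ hθ) (h1 a ha θ' hθ')
    (h2 a ha θ hθ θ' hθ') (h2 a ha θ' hθ' θ hθ)
end

section
/- Let u : A × Θ → ℝ be continuous with u(a,·) continuous and with partial derivative u_θ > 0 everywhere (A, Θ compact intervals). Fix a ∈ A and θ₁ < θ₂ < θ₃ in Θ. If v : A × Θ → ℝ has partial derivative v_θ in θ and the ratio v_θ(a,θ)/u_θ(a,θ) is (weakly) increasing in θ, then (v(a,θ₃)−v(a,θ₂))·(u(a,θ₂)−u(a,θ₁)) − (v(a,θ₂)−v(a,θ₁))·(u(a,θ₃)−u(a,θ₂)) ≥ 0; if v_θ/u_θ is strictly increasing in θ, the inequality is strict. -/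
/-! Subtracting `r · u` from `v`, with `r = v_θ(a,θ₂)/u_θ(a,θ₂)`, leaves the cross-difference
unchanged, and makes `v - r u` non-increasing on `[θ₁, θ₂]` and non-decreasing on `[θ₂, θ₃]`, since
its derivative `u_θ · (v_θ/u_θ - r)` changes sign at `θ₂`. Both terms of the rewritten
cross-difference are then products of nonnegative factors. -/

open Set

theorem monotoneOn_Icc_of_hasDerivAt_nonneg {f f' : ℝ → ℝ} {a b : ℝ}
    (hf : ∀ t ∈ Icc a b, HasDerivAt f (f' t) t) (hf' : ∀ t ∈ Ioo a b, 0 ≤ f' t) :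
    MonotoneOn f (Icc a b) := by
  refine monotoneOn_of_hasDerivWithinAt_nonneg (convex_Icc a b)
    (fun t ht => (hf t ht).continuousAt.continuousWithinAt) (fun t ht => ?_)
    (by rwa [interior_Icc])
  rw [interior_Icc] at ht ⊢
  exact (hf t (Ioo_subset_Icc_self ht)).hasDerivWithinAt

theorem strictMonoOn_Icc_of_hasDerivAt_pos {f f' : ℝ → ℝ} {a b : ℝ}
    (hf : ∀ t ∈ Icc a b, HasDerivAt f (f' t) t) (hf' : ∀ t ∈ Ioo a b, 0 < f' t) :
    StrictMonoOn f (Icc a b) := by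
  refine strictMonoOn_of_hasDerivWithinAt_pos (convex_Icc a b)
    (fun t ht => (hf t ht).continuousAt.continuousWithinAt) (fun t ht => ?_)
    (by rwa [interior_Icc])
  rw [interior_Icc] at ht ⊢
  exact (hf t (Ioo_subset_Icc_self ht)).hasDerivWithinAt

section CauchyMeanValue

variable {f g f' g' : ℝ → ℝ} {a b c : ℝ}

theorem sub_le_mul_sub_of_div_le (hab : a ≤ b)
    (hf : ∀ t ∈ Icc a b, HasDerivAt f (f' t) t) (hg : ∀ t ∈ Icc a b, HasDerivAt g (g' t) t)
    (hg' : ∀ t ∈ Ioo a b, 0 < g' t) (hc : ∀ t ∈ Ioo a b, f' t / g' t ≤ c) :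
    f b - f a ≤ c * (g b - g a) := by
  have hmono : MonotoneOn (fun t => c * g t - f t) (Icc a b) :=
    monotoneOn_Icc_of_hasDerivAt_nonneg
      (fun t ht => ((hg t ht).const_mul c).sub (hf t ht))
      (fun t ht => sub_nonneg.2 ((div_le_iff₀ (hg' t ht)).1 (hc t ht)))
  have := hmono (left_mem_Icc.2 hab) (right_mem_Icc.2 hab) hab
  linarith

theorem mul_sub_le_sub_of_le_div (hab : a ≤ b)
    (hf : ∀ t ∈ Icc a b, HasDerivAt f (f' t) t) (hg : ∀ t ∈ Icc a b, HasDerivAt g (g' t) t)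
    (hg' : ∀ t ∈ Ioo a b, 0 < g' t) (hc : ∀ t ∈ Ioo a b, c ≤ f' t / g' t) :
    c * (g b - g a) ≤ f b - f a := by
  have hmono : MonotoneOn (fun t => f t - c * g t) (Icc a b) :=
    monotoneOn_Icc_of_hasDerivAt_nonneg
      (fun t ht => (hf t ht).sub ((hg t ht).const_mul c))
      (fun t ht => sub_nonneg.2 ((le_div_iff₀ (hg' t ht)).1 (hc t ht)))
  have := hmono (left_mem_Icc.2 hab) (right_mem_Icc.2 hab) hab
  linarith

theorem mul_sub_lt_sub_of_lt_div (hab : a < b)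
    (hf : ∀ t ∈ Icc a b, HasDerivAt f (f' t) t) (hg : ∀ t ∈ Icc a b, HasDerivAt g (g' t) t)
    (hg' : ∀ t ∈ Ioo a b, 0 < g' t) (hc : ∀ t ∈ Ioo a b, c < f' t / g' t) :
    c * (g b - g a) < f b - f a := by
  have hmono : StrictMonoOn (fun t => f t - c * g t) (Icc a b) :=
    strictMonoOn_Icc_of_hasDerivAt_pos
      (fun t ht => (hf t ht).sub ((hg t ht).const_mul c))
      (fun t ht => sub_pos.2 ((lt_div_iff₀ (hg' t ht)).1 (hc t ht)))
  have := hmono (left_mem_Icc.2 hab.le) (right_mem_Icc.2 hab.le) hab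
  linarith

end CauchyMeanValue

section CrossDifference

variable {f g f' g' : ℝ → ℝ} {x y z : ℝ}

theorem cross_diff_nonneg_of_monotoneOn_div (hxy : x ≤ y) (hyz : y ≤ z)
    (hf : ∀ t ∈ Icc x z, HasDerivAt f (f' t) t) (hg : ∀ t ∈ Icc x z, HasDerivAt g (g' t) t)
    (hg' : ∀ t ∈ Icc x z, 0 < g' t) (hmono : MonotoneOn (fun t => f' t / g' t) (Icc x z)) :
    0 ≤ (f z - f y) * (g y - g x) - (f y - f x) * (g z - g y) := by
  have hxy_sub : Icc x y ⊆ Icc x z := Icc_subset_Icc_right hyz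
  have hyz_sub : Icc y z ⊆ Icc x z := Icc_subset_Icc_left hxy
  have hy : y ∈ Icc x z := ⟨hxy, hyz⟩
  have hleft : f y - f x ≤ f' y / g' y * (g y - g x) :=
    sub_le_mul_sub_of_div_le hxy (fun t ht => hf t (hxy_sub ht)) (fun t ht => hg t (hxy_sub ht))
      (fun t ht => hg' t (hxy_sub (Ioo_subset_Icc_self ht)))
      (fun t ht => hmono (hxy_sub (Ioo_subset_Icc_self ht)) hy ht.2.le)
  have hright : f' y / g' y * (g z - g y) ≤ f z - f y :=
    mul_sub_le_sub_of_le_div hyz (fun t ht => hf t (hyz_sub ht)) (fun t ht => hg t (hyz_sub ht))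
      (fun t ht => hg' t (hyz_sub (Ioo_subset_Icc_self ht)))
      (fun t ht => hmono hy (hyz_sub (Ioo_subset_Icc_self ht)) ht.1.le)
  have hg_mono : MonotoneOn g (Icc x z) :=
    monotoneOn_Icc_of_hasDerivAt_nonneg hg fun t ht => (hg' t (Ioo_subset_Icc_self ht)).le
  have hgxy := sub_nonneg.2 (hg_mono (left_mem_Icc.2 (hxy.trans hyz)) hy hxy)
  have hgyz := sub_nonneg.2 (hg_mono hy (right_mem_Icc.2 (hxy.trans hyz)) hyz)
  nlinarith [mul_nonneg (sub_nonneg.2 hright) hgxy, mul_nonneg (sub_nonneg.2 hleft) hgyz]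

theorem cross_diff_pos_of_strictMonoOn_div (hxy : x < y) (hyz : y < z)
    (hf : ∀ t ∈ Icc x z, HasDerivAt f (f' t) t) (hg : ∀ t ∈ Icc x z, HasDerivAt g (g' t) t)
    (hg' : ∀ t ∈ Icc x z, 0 < g' t) (hmono : StrictMonoOn (fun t => f' t / g' t) (Icc x z)) :
    0 < (f z - f y) * (g y - g x) - (f y - f x) * (g z - g y) := by
  have hxy_sub : Icc x y ⊆ Icc x z := Icc_subset_Icc_right hyz.le
  have hyz_sub : Icc y z ⊆ Icc x z := Icc_subset_Icc_left hxy.le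
  have hy : y ∈ Icc x z := ⟨hxy.le, hyz.le⟩
  have hleft : f y - f x ≤ f' y / g' y * (g y - g x) :=
    sub_le_mul_sub_of_div_le hxy.le (fun t ht => hf t (hxy_sub ht))
      (fun t ht => hg t (hxy_sub ht)) (fun t ht => hg' t (hxy_sub (Ioo_subset_Icc_self ht)))
      (fun t ht => (hmono (hxy_sub (Ioo_subset_Icc_self ht)) hy ht.2).le)
  have hright : f' y / g' y * (g z - g y) < f z - f y :=
    mul_sub_lt_sub_of_lt_div hyz (fun t ht => hf t (hyz_sub ht)) (fun t ht => hg t (hyz_sub ht))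
      (fun t ht => hg' t (hyz_sub (Ioo_subset_Icc_self ht)))
      (fun t ht => hmono hy (hyz_sub (Ioo_subset_Icc_self ht)) ht.1)
  have hg_mono : StrictMonoOn g (Icc x z) :=
    strictMonoOn_Icc_of_hasDerivAt_pos hg fun t ht => hg' t (Ioo_subset_Icc_self ht)
  have hgxy := sub_pos.2 (hg_mono (left_mem_Icc.2 (hxy.trans hyz).le) hy hxy)
  have hgyz := sub_pos.2 (hg_mono hy (right_mem_Icc.2 (hxy.trans hyz).le) hyz)
  nlinarith [mul_pos (sub_pos.2 hright) hgxy, mul_nonneg (sub_nonneg.2 hleft) hgyz.le]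

end CrossDifference

theorem stmt_4_general (aL aR tL tR : ℝ)
    (u v uθ vθ : ℝ → ℝ → ℝ)
    (huderiv : ∀ a ∈ Set.Icc aL aR, ∀ θ ∈ Set.Icc tL tR,
      HasDerivAt (fun t => u a t) (uθ a θ) θ)
    (hvderiv : ∀ a ∈ Set.Icc aL aR, ∀ θ ∈ Set.Icc tL tR,
      HasDerivAt (fun t => v a t) (vθ a θ) θ)
    (huθpos : ∀ a ∈ Set.Icc aL aR, ∀ θ ∈ Set.Icc tL tR, 0 < uθ a θ)
    (a : ℝ) (ha : a ∈ Set.Icc aL aR)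
    (θ₁ θ₂ θ₃ : ℝ) (hθ₁ : θ₁ ∈ Set.Icc tL tR) (hθ₃ : θ₃ ∈ Set.Icc tL tR)
    (h12 : θ₁ < θ₂) (h23 : θ₂ < θ₃)
    (hmono : ∀ s ∈ Set.Icc tL tR, ∀ t ∈ Set.Icc tL tR, s ≤ t →
      vθ a s / uθ a s ≤ vθ a t / uθ a t) :
    0 ≤ (v a θ₃ - v a θ₂) * (u a θ₂ - u a θ₁) - (v a θ₂ - v a θ₁) * (u a θ₃ - u a θ₂) ∧
    ((∀ s ∈ Set.Icc tL tR, ∀ t ∈ Set.Icc tL tR, s < t →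
        vθ a s / uθ a s < vθ a t / uθ a t) →
      0 < (v a θ₃ - v a θ₂) * (u a θ₂ - u a θ₁) - (v a θ₂ - v a θ₁) * (u a θ₃ - u a θ₂)) := by
  have hsub : Icc θ₁ θ₃ ⊆ Icc tL tR := Icc_subset_Icc hθ₁.1 hθ₃.2
  have hv : ∀ t ∈ Icc θ₁ θ₃, HasDerivAt (v a) (vθ a t) t := fun t ht => hvderiv a ha t (hsub ht)
  have hu : ∀ t ∈ Icc θ₁ θ₃, HasDerivAt (u a) (uθ a t) t := fun t ht => huderiv a ha t (hsub ht)
  have hu' : ∀ t ∈ Icc θ₁ θ₃, 0 < uθ a t := fun t ht => huθpos a ha t (hsub ht)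
  exact ⟨cross_diff_nonneg_of_monotoneOn_div h12.le h23.le hv hu hu' (MonotoneOn.mono hmono hsub),
    fun hstrict => cross_diff_pos_of_strictMonoOn_div h12 h23 hv hu hu'
      (StrictMonoOn.mono hstrict hsub)⟩

/-- If `v_θ/u_θ` is (strictly) increasing in `θ`, then the cross-difference expression
`(v(a,θ₃)−v(a,θ₂))(u(a,θ₂)−u(a,θ₁)) − (v(a,θ₂)−v(a,θ₁))(u(a,θ₃)−u(a,θ₂))` is
nonnegative (positive). -/
theorem stmt_4 (aL aR tL tR : ℝ) (hA : aL ≤ aR) (hT : tL ≤ tR)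
    (u v uθ vθ : ℝ → ℝ → ℝ)
    (hucont : ContinuousOn (fun p : ℝ × ℝ => u p.1 p.2) (Set.Icc aL aR ×ˢ Set.Icc tL tR))
    (huθcont : ContinuousOn (fun p : ℝ × ℝ => uθ p.1 p.2) (Set.Icc aL aR ×ˢ Set.Icc tL tR))
    (hvθcont : ContinuousOn (fun p : ℝ × ℝ => vθ p.1 p.2) (Set.Icc aL aR ×ˢ Set.Icc tL tR))
    (huderiv : ∀ a ∈ Set.Icc aL aR, ∀ θ ∈ Set.Icc tL tR,
      HasDerivAt (fun t => u a t) (uθ a θ) θ)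
    (hvderiv : ∀ a ∈ Set.Icc aL aR, ∀ θ ∈ Set.Icc tL tR,
      HasDerivAt (fun t => v a t) (vθ a θ) θ)
    (huθpos : ∀ a ∈ Set.Icc aL aR, ∀ θ ∈ Set.Icc tL tR, 0 < uθ a θ)
    (a : ℝ) (ha : a ∈ Set.Icc aL aR)
    (θ₁ θ₂ θ₃ : ℝ) (hθ₁ : θ₁ ∈ Set.Icc tL tR) (hθ₃ : θ₃ ∈ Set.Icc tL tR)
    (h12 : θ₁ < θ₂) (h23 : θ₂ < θ₃)
    (hmono : ∀ s ∈ Set.Icc tL tR, ∀ t ∈ Set.Icc tL tR, s ≤ t →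
      vθ a s / uθ a s ≤ vθ a t / uθ a t) :
    0 ≤ (v a θ₃ - v a θ₂) * (u a θ₂ - u a θ₁) - (v a θ₂ - v a θ₁) * (u a θ₃ - u a θ₂) ∧
    ((∀ s ∈ Set.Icc tL tR, ∀ t ∈ Set.Icc tL tR, s < t →
        vθ a s / uθ a s < vθ a t / uθ a t) →
      0 < (v a θ₃ - v a θ₂) * (u a θ₂ - u a θ₁) - (v a θ₂ - v a θ₁) * (u a θ₃ - u a θ₂)) :=
  stmt_4_general aL aR tL tR u v uθ vθ huderiv hvderiv huθpos a ha θ₁ θ₂ θ₃ hθ₁ hθ₃ h12 h23 hmono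
end

section
/- Let V : [0,1] × [0,1] → ℝ be convex in its first argument and satisfy V(θ₁,θ₂) + V(θ₂,θ₁) ≤ V(θ₁,θ₁) + V(θ₂,θ₂) for all θ₁, θ₂ ∈ [0,1]. Then for all θ₁ < θ₂ in [0,1] and all ρ ∈ (0,1), letting a = ρθ₁ + (1−ρ)θ₂: ρ·V(a, θ₁) + (1−ρ)·V(a, θ₂) ≤ ρ·V(θ₁,θ₁) + (1−ρ)·V(θ₂,θ₂). -/
/-!
Evaluate both states' payoffs at the pooled action and apply convexity in the action:
this bounds the pooled payoff by `ρ² V(θ₁,θ₁) + ρ(1-ρ)(V(θ₂,θ₁) + V(θ₁,θ₂)) + (1-ρ)² V(θ₂,θ₂)`.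
The diagonal-dominance condition replaces the cross terms by diagonal ones, and the
result collapses to `ρ V(θ₁,θ₁) + (1-ρ) V(θ₂,θ₂)` because `ρ + (1-ρ) = 1`.
-/

theorem ConvexOn.pooling_le_diagonal {E : Type*} [AddCommGroup E] [Module ℝ E]
    {s : Set E} {V : E → E → ℝ} {x y : E} (hx : x ∈ s) (hy : y ∈ s)
    (hVx : ConvexOn ℝ s (V · x)) (hVy : ConvexOn ℝ s (V · y))
    (hsub : V x y + V y x ≤ V x x + V y y) {a b : ℝ} (ha : 0 ≤ a) (hb : 0 ≤ b)
    (hab : a + b = 1) :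
    a * V (a • x + b • y) x + b * V (a • x + b • y) y ≤ a * V x x + b * V y y := by
  have hconv_x : V (a • x + b • y) x ≤ a * V x x + b * V y x := hVx.2 hx hy ha hb hab
  have hconv_y : V (a • x + b • y) y ≤ a * V x y + b * V y y := hVy.2 hx hy ha hb hab
  calc a * V (a • x + b • y) x + b * V (a • x + b • y) y
      ≤ a * (a * V x x + b * V y x) + b * (a * V x y + b * V y y) := by gcongr
    _ = a ^ 2 * V x x + a * b * (V x y + V y x) + b ^ 2 * V y y := by ring
    _ ≤ a ^ 2 * V x x + a * b * (V x x + V y y) + b ^ 2 * V y y := by gcongr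
    _ = a * V x x + b * V y y := by linear_combination (a * V x x + b * V y y) * hab

theorem stmt_7_general (V : ℝ → ℝ → ℝ)
    (hconv : ∀ θ ∈ Set.Icc (0:ℝ) 1, ConvexOn ℝ (Set.Icc (0:ℝ) 1) (fun a => V a θ))
    (hsub : ∀ θ₁ ∈ Set.Icc (0:ℝ) 1, ∀ θ₂ ∈ Set.Icc (0:ℝ) 1,
      V θ₁ θ₂ + V θ₂ θ₁ ≤ V θ₁ θ₁ + V θ₂ θ₂)
    (θ₁ θ₂ : ℝ) (hθ₁ : θ₁ ∈ Set.Icc (0:ℝ) 1) (hθ₂ : θ₂ ∈ Set.Icc (0:ℝ) 1)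
    (ρ : ℝ) (hρ : ρ ∈ Set.Ioo (0:ℝ) 1) :
    ρ * V (ρ * θ₁ + (1 - ρ) * θ₂) θ₁ + (1 - ρ) * V (ρ * θ₁ + (1 - ρ) * θ₂) θ₂ ≤
      ρ * V θ₁ θ₁ + (1 - ρ) * V θ₂ θ₂ :=
  (hconv θ₁ hθ₁).pooling_le_diagonal hθ₁ hθ₂ (hconv θ₂ hθ₂) (hsub θ₁ hθ₁ θ₂ hθ₂)
    hρ.1.le (sub_nonneg.2 hρ.2.le) (add_sub_cancel ρ 1)

/-- Full-disclosure inequality in the simple receiver case: if `V` is convex in its first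
argument and satisfies the diagonal-dominance condition, then pooling is (weakly) worse
than full disclosure. -/
theorem stmt_7 (V : ℝ → ℝ → ℝ)
    (hconv : ∀ θ ∈ Set.Icc (0:ℝ) 1, ConvexOn ℝ (Set.Icc (0:ℝ) 1) (fun a => V a θ))
    (hsub : ∀ θ₁ ∈ Set.Icc (0:ℝ) 1, ∀ θ₂ ∈ Set.Icc (0:ℝ) 1,
      V θ₁ θ₂ + V θ₂ θ₁ ≤ V θ₁ θ₁ + V θ₂ θ₂)
    (θ₁ θ₂ : ℝ) (hθ₁ : θ₁ ∈ Set.Icc (0:ℝ) 1) (hθ₂ : θ₂ ∈ Set.Icc (0:ℝ) 1)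
    (hlt : θ₁ < θ₂) (ρ : ℝ) (hρ : ρ ∈ Set.Ioo (0:ℝ) 1) :
    ρ * V (ρ * θ₁ + (1 - ρ) * θ₂) θ₁ + (1 - ρ) * V (ρ * θ₁ + (1 - ρ) * θ₂) θ₂ ≤
      ρ * V θ₁ θ₁ + (1 - ρ) * V θ₂ θ₂ :=
  stmt_7_general V hconv hsub θ₁ θ₂ hθ₁ hθ₂ ρ hρ
end

section
/- For θ₁ < θ₂ with θ₁, θ₂ > 0 and ρ ∈ (0,1), define a⋆(ρ) = (ρθ₁ + (1−ρ)θ₂)/(1 + ρθ₁² + (1−ρ)θ₂²) and φ(ρ) = a⋆(ρ)·(ρ/θ₁ + (1−ρ)/θ₂). Then: d a⋆/dρ = (θ₂−θ₁)(θ₁θ₂−1)/(1 + ρθ₁² + (1−ρ)θ₂²)², and if θ₁θ₂ > 1 then φ is strictly convex on (0,1), so ρ·φ(1) + (1−ρ)·φ(0) > φ(ρ) for all ρ ∈ (0,1); if θ₁θ₂ < 1 then φ is strictly concave and the reverse strict inequality holds. -/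
/-- Contest-design computation: derivative of `a⋆(ρ)` and strict convexity/concavity of
`φ(ρ) = a⋆(ρ)·(ρ/θ₁ + (1−ρ)/θ₂)` according to the sign of `θ₁θ₂ − 1`. -/
theorem stmt_9 (θ₁ θ₂ : ℝ) (h1 : 0 < θ₁) (hlt : θ₁ < θ₂) :
    (∀ ρ ∈ Set.Ioo (0:ℝ) 1,
      HasDerivAt (fun r : ℝ => (r * θ₁ + (1 - r) * θ₂) / (1 + r * θ₁ ^ 2 + (1 - r) * θ₂ ^ 2))
        ((θ₂ - θ₁) * (θ₁ * θ₂ - 1) / (1 + ρ * θ₁ ^ 2 + (1 - ρ) * θ₂ ^ 2) ^ 2) ρ) ∧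
    (1 < θ₁ * θ₂ →
      StrictConvexOn ℝ (Set.Ioo (0:ℝ) 1)
        (fun r : ℝ => (r * θ₁ + (1 - r) * θ₂) / (1 + r * θ₁ ^ 2 + (1 - r) * θ₂ ^ 2) *
          (r / θ₁ + (1 - r) / θ₂)) ∧
      ∀ ρ ∈ Set.Ioo (0:ℝ) 1,
        (fun r : ℝ => (r * θ₁ + (1 - r) * θ₂) / (1 + r * θ₁ ^ 2 + (1 - r) * θ₂ ^ 2) *
          (r / θ₁ + (1 - r) / θ₂)) ρ <
        ρ * ((fun r : ℝ => (r * θ₁ + (1 - r) * θ₂) / (1 + r * θ₁ ^ 2 + (1 - r) * θ₂ ^ 2) *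
          (r / θ₁ + (1 - r) / θ₂)) 1) +
        (1 - ρ) * ((fun r : ℝ => (r * θ₁ + (1 - r) * θ₂) / (1 + r * θ₁ ^ 2 + (1 - r) * θ₂ ^ 2) *
          (r / θ₁ + (1 - r) / θ₂)) 0)) ∧
    (θ₁ * θ₂ < 1 →
      StrictConcaveOn ℝ (Set.Ioo (0:ℝ) 1)
        (fun r : ℝ => (r * θ₁ + (1 - r) * θ₂) / (1 + r * θ₁ ^ 2 + (1 - r) * θ₂ ^ 2) *
          (r / θ₁ + (1 - r) / θ₂)) ∧
      ∀ ρ ∈ Set.Ioo (0:ℝ) 1,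
        ρ * ((fun r : ℝ => (r * θ₁ + (1 - r) * θ₂) / (1 + r * θ₁ ^ 2 + (1 - r) * θ₂ ^ 2) *
          (r / θ₁ + (1 - r) / θ₂)) 1) +
        (1 - ρ) * ((fun r : ℝ => (r * θ₁ + (1 - r) * θ₂) / (1 + r * θ₁ ^ 2 + (1 - r) * θ₂ ^ 2) *
          (r / θ₁ + (1 - r) / θ₂)) 0) <
        (fun r : ℝ => (r * θ₁ + (1 - r) * θ₂) / (1 + r * θ₁ ^ 2 + (1 - r) * θ₂ ^ 2) *
          (r / θ₁ + (1 - r) / θ₂)) ρ) := by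
  have h2 : 0 < θ₂ := h1.trans hlt
  have h1' : θ₁ ≠ 0 := ne_of_gt h1
  have h2' : θ₂ ≠ 0 := ne_of_gt h2
  -- the denominator
  set Dn : ℝ → ℝ := fun r => 1 + r * θ₁ ^ 2 + (1 - r) * θ₂ ^ 2 with hDn
  have hDpos : ∀ r ∈ Set.Icc (0:ℝ) 1, 0 < Dn r := by
    intro r hr
    have h0 : 0 ≤ r := hr.1
    have h1r : 0 ≤ 1 - r := by linarith [hr.2]
    have := mul_nonneg h0 (sq_nonneg θ₁)
    have := mul_nonneg h1r (sq_nonneg θ₂)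
    simp only [hDn]; linarith
  have hDD : ∀ x : ℝ, HasDerivAt Dn (θ₁ ^ 2 - θ₂ ^ 2) x := by
    intro x
    have : HasDerivAt (fun r : ℝ => 1 + r * θ₁ ^ 2 + (1 - r) * θ₂ ^ 2)
        (0 + 1 * θ₁ ^ 2 + (0 - 1) * θ₂ ^ 2) x := by
      exact (((hasDerivAt_const x (1:ℝ)).add ((hasDerivAt_id x).mul_const _)).add
        (((hasDerivAt_const x (1:ℝ)).sub (hasDerivAt_id x)).mul_const _))
    convert this using 1; ring
  have hND : ∀ x : ℝ, HasDerivAt (fun r : ℝ => r * θ₁ + (1 - r) * θ₂) (θ₁ - θ₂) x := by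
    intro x
    have : HasDerivAt (fun r : ℝ => r * θ₁ + (1 - r) * θ₂) (1 * θ₁ + (0 - 1) * θ₂) x :=
      ((hasDerivAt_id x).mul_const _).add
        (((hasDerivAt_const x (1:ℝ)).sub (hasDerivAt_id x)).mul_const _)
    convert this using 1; ring
  have hLD : ∀ x : ℝ, HasDerivAt (fun r : ℝ => r / θ₁ + (1 - r) / θ₂) (1 / θ₁ - 1 / θ₂) x := by
    intro x
    have : HasDerivAt (fun r : ℝ => r / θ₁ + (1 - r) / θ₂) (1 / θ₁ + (0 - 1) / θ₂) x :=
      ((hasDerivAt_id x).div_const _).add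
        (((hasDerivAt_const x (1:ℝ)).sub (hasDerivAt_id x)).div_const _)
    convert this using 1; ring
  -- Part 1 : derivative of a⋆
  have part1 : ∀ ρ ∈ Set.Ioo (0:ℝ) 1,
      HasDerivAt (fun r : ℝ => (r * θ₁ + (1 - r) * θ₂) / (1 + r * θ₁ ^ 2 + (1 - r) * θ₂ ^ 2))
        ((θ₂ - θ₁) * (θ₁ * θ₂ - 1) / (1 + ρ * θ₁ ^ 2 + (1 - ρ) * θ₂ ^ 2) ^ 2) ρ := by
    intro ρ hρ
    have hD : Dn ρ ≠ 0 := ne_of_gt (hDpos ρ (Set.mem_Icc_of_Ioo hρ))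
    have := (hND ρ).fun_div (hDD ρ) hD
    refine this.congr_deriv ?_
    simp only [hDn]
    field_simp
    ring
  -- φ and its first derivative
  set φ : ℝ → ℝ := fun r => (r * θ₁ + (1 - r) * θ₂) / (1 + r * θ₁ ^ 2 + (1 - r) * θ₂ ^ 2) *
      (r / θ₁ + (1 - r) / θ₂) with hφ
  set g : ℝ → ℝ := fun r =>
      (((θ₁ - θ₂) * (r / θ₁ + (1 - r) / θ₂) + (r * θ₁ + (1 - r) * θ₂) * (1 / θ₁ - 1 / θ₂)) * Dn r
        - (r * θ₁ + (1 - r) * θ₂) * (r / θ₁ + (1 - r) / θ₂) * (θ₁ ^ 2 - θ₂ ^ 2)) / Dn r ^ 2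
    with hg
  have hφd : ∀ x : ℝ, Dn x ≠ 0 → HasDerivAt φ (g x) x := by
    intro x hx
    have h := (((hND x).fun_div (hDD x) hx).fun_mul (hLD x))
    refine h.congr_deriv ?_
    simp only [hg, hDn]
    field_simp
    ring
  -- second derivative of φ
  set G : ℝ → ℝ := fun x =>
      2 * (θ₂ - θ₁) ^ 2 * (θ₁ * θ₂ - 1) * (θ₁ ^ 2 + θ₂ ^ 2 + θ₁ * θ₂ + 1) / (θ₁ * θ₂ * Dn x ^ 3)
    with hG
  have hgd : ∀ x : ℝ, Dn x ≠ 0 → HasDerivAt g (G x) x := by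
    intro x hx
    have hnum : HasDerivAt (fun r : ℝ =>
        ((θ₁ - θ₂) * (r / θ₁ + (1 - r) / θ₂) + (r * θ₁ + (1 - r) * θ₂) * (1 / θ₁ - 1 / θ₂)) * Dn r
          - (r * θ₁ + (1 - r) * θ₂) * (r / θ₁ + (1 - r) / θ₂) * (θ₁ ^ 2 - θ₂ ^ 2))
        ((((θ₁ - θ₂) * (1 / θ₁ - 1 / θ₂) + (θ₁ - θ₂) * (1 / θ₁ - 1 / θ₂)) * Dn x
          + ((θ₁ - θ₂) * (x / θ₁ + (1 - x) / θ₂) + (x * θ₁ + (1 - x) * θ₂) * (1 / θ₁ - 1 / θ₂))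
            * (θ₁ ^ 2 - θ₂ ^ 2))
          - ((θ₁ - θ₂) * (x / θ₁ + (1 - x) / θ₂)
            + (x * θ₁ + (1 - x) * θ₂) * (1 / θ₁ - 1 / θ₂)) * (θ₁ ^ 2 - θ₂ ^ 2)) x := by
      exact ((((hLD x).const_mul _).add ((hND x).mul_const _)).mul (hDD x)).sub
        (((hND x).mul (hLD x)).mul_const _)
    have hden : HasDerivAt (fun r : ℝ => Dn r ^ 2) (2 * Dn x ^ 1 * (θ₁ ^ 2 - θ₂ ^ 2)) x := by
      simpa using (hDD x).fun_pow 2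
    have hne : Dn x ^ 2 ≠ 0 := pow_ne_zero _ hx
    have h := hnum.fun_div hden hne
    refine h.congr_deriv ?_
    simp only [hG, hDn]
    field_simp
    ring
  -- continuity of φ on [0,1]
  have hcont : ContinuousOn φ (Set.Icc (0:ℝ) 1) := by
    apply ContinuousOn.mul
    · apply ContinuousOn.div (by fun_prop) (by fun_prop)
      intro x hx; exact ne_of_gt (hDpos x hx)
    · fun_prop
  -- second derivative value on the interior
  have hderiv2 : ∀ x ∈ Set.Ioo (0:ℝ) 1, deriv^[2] φ x = G x := by
    intro x hx
    have hxI : Dn x ≠ 0 := ne_of_gt (hDpos x (Set.mem_Icc_of_Ioo hx))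
    have hUopen : IsOpen {r : ℝ | Dn r ≠ 0} := by
      have : Continuous Dn := by fun_prop
      exact isOpen_compl_singleton.preimage this
    have hev : deriv φ =ᶠ[nhds x] g := by
      filter_upwards [hUopen.mem_nhds hxI] with y hy using (hφd y hy).deriv
    have : deriv^[2] φ x = deriv (deriv φ) x := by
      simp [Function.iterate_succ, Function.comp]
    rw [this, hev.deriv_eq, (hgd x hxI).deriv]
  have hIoo : Set.Ioo (0:ℝ) 1 ⊆ Set.Icc (0:ℝ) 1 := Set.Ioo_subset_Icc_self
  have hθθ : 0 < θ₁ * θ₂ := mul_pos h1 h2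
  have hsq : 0 < (θ₂ - θ₁) ^ 2 := pow_pos (by linarith) 2
  have hbig : 0 < θ₁ ^ 2 + θ₂ ^ 2 + θ₁ * θ₂ + 1 := by positivity
  refine ⟨part1, ?_, ?_⟩
  · intro hgt
    have hGpos : ∀ x ∈ Set.Ioo (0:ℝ) 1, 0 < G x := by
      intro x hx
      have hD : 0 < Dn x := hDpos x (Set.mem_Icc_of_Ioo hx)
      have h3 : 0 < θ₁ * θ₂ - 1 := by linarith
      simp only [hG]
      exact div_pos (mul_pos (mul_pos (mul_pos two_pos hsq) h3) hbig)
        (mul_pos hθθ (pow_pos hD 3))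
    have hconv : StrictConvexOn ℝ (Set.Icc (0:ℝ) 1) φ := by
      apply strictConvexOn_of_deriv2_pos (convex_Icc 0 1) hcont
      intro x hx
      rw [interior_Icc] at hx
      rw [hderiv2 x hx]
      exact hGpos x hx
    refine ⟨hconv.subset hIoo (convex_Ioo 0 1), ?_⟩
    intro ρ hρ
    have := hconv.2 (Set.mem_Icc.2 ⟨zero_le_one, le_refl 1⟩)
      (Set.mem_Icc.2 ⟨le_refl 0, zero_le_one⟩) one_ne_zero hρ.1
      (show (0:ℝ) < 1 - ρ by linarith [hρ.2]) (show ρ + (1 - ρ) = 1 by ring)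
    simpa [φ, smul_eq_mul] using this
  · intro hltp
    have hGneg : ∀ x ∈ Set.Ioo (0:ℝ) 1, G x < 0 := by
      intro x hx
      have hD : 0 < Dn x := hDpos x (Set.mem_Icc_of_Ioo hx)
      have h3 : θ₁ * θ₂ - 1 < 0 := by linarith
      simp only [hG]
      apply div_neg_of_neg_of_pos
      · have : 0 < 2 * (θ₂ - θ₁) ^ 2 * (1 - θ₁ * θ₂) * (θ₁ ^ 2 + θ₂ ^ 2 + θ₁ * θ₂ + 1) := by
          have : 0 < 1 - θ₁ * θ₂ := by linarith
          positivity
        nlinarith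
      · positivity
    have hconc : StrictConcaveOn ℝ (Set.Icc (0:ℝ) 1) φ := by
      apply strictConcaveOn_of_deriv2_neg (convex_Icc 0 1) hcont
      intro x hx
      rw [interior_Icc] at hx
      rw [hderiv2 x hx]
      exact hGneg x hx
    refine ⟨hconc.subset hIoo (convex_Ioo 0 1), ?_⟩
    intro ρ hρ
    have := hconc.2 (Set.mem_Icc.2 ⟨zero_le_one, le_refl 1⟩)
      (Set.mem_Icc.2 ⟨le_refl 0, zero_le_one⟩) one_ne_zero hρ.1
      (show (0:ℝ) < 1 - ρ by linarith [hρ.2]) (show ρ + (1 - ρ) = 1 by ring)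
    simpa [φ, smul_eq_mul] using this
end

section
/- Let T : ℝ → ℝ be differentiable, odd (T(−y) = −T(y)), with T' strictly positive and strictly log-concave. Then: (i) T'(0) > T'(y) for all y ≠ 0; (ii) T is strictly concave on [0,∞); (iii) for all 0 < b and all x < x', T'(x'+b)/T'(x') < T'(x+b)/T'(x); and (iv) for all θ < a < 0, [T(−2θ)−T(−2a)]/[T'(−2a)(2a−2θ)] < [T(a−θ)−T(0)]/[T'(0)(a−θ)]. -/
/-- Properties of an odd differentiable `T` with strictly positive, strictly log-concave
derivative: (i) `T'(0)` is the strict maximum of `T'`; (ii) `T` is strictly concave on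
`[0,∞)`; (iii) `T'(x+b)/T'(x)` is strictly decreasing in `x` for `b > 0`; (iv) the secant
slope comparison used in the stochastic-signal example. -/
theorem stmt_12 (T : ℝ → ℝ) (hdiff : Differentiable ℝ T)
    (hodd : ∀ y, T (-y) = -T y)
    (hpos : ∀ y, 0 < deriv T y)
    (hlc : StrictConcaveOn ℝ Set.univ (fun y => Real.log (deriv T y))) :
    (∀ y : ℝ, y ≠ 0 → deriv T y < deriv T 0) ∧
    StrictConcaveOn ℝ (Set.Ici (0:ℝ)) T ∧
    (∀ b : ℝ, 0 < b → ∀ x x' : ℝ, x < x' →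
      deriv T (x' + b) / deriv T x' < deriv T (x + b) / deriv T x) ∧
    (∀ θ a : ℝ, θ < a → a < 0 →
      (T (-2 * θ) - T (-2 * a)) / (deriv T (-2 * a) * (2 * a - 2 * θ)) <
        (T (a - θ) - T 0) / (deriv T 0 * (a - θ))) := by
  -- The derivative of an odd function is even.
  have heven : ∀ y : ℝ, deriv T (-y) = deriv T y := by
    intro y
    have h1 : deriv (fun x => T (-x)) y = -deriv T (-y) := deriv_comp_neg T y
    have h2 : (fun x => T (-x)) = fun x => -T x := funext hodd
    rw [h2] at h1
    have h3 : deriv (fun x => -T x) y = -deriv T y := by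
      simpa using deriv.neg (f := T) (x := y)
    have := h1.symm.trans h3
    linarith [this]
  have feven : ∀ y : ℝ, Real.log (deriv T (-y)) = Real.log (deriv T y) := by
    intro y; rw [heven]
  -- (i)
  have claim1 : ∀ y : ℝ, y ≠ 0 → deriv T y < deriv T 0 := by
    intro y hy
    have hne : -y ≠ y := by
      intro h; apply hy; linarith [h]
    have h := hlc.2 (Set.mem_univ (-y)) (Set.mem_univ y) hne
      (show (0:ℝ) < 1/2 by norm_num) (show (0:ℝ) < 1/2 by norm_num)
      (show (1:ℝ)/2 + 1/2 = 1 by norm_num)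
    simp only [smul_eq_mul] at h
    have e : (1:ℝ)/2 * (-y) + (1:ℝ)/2 * y = 0 := by ring
    rw [e] at h
    rw [feven y] at h
    have : Real.log (deriv T y) < Real.log (deriv T 0) := by linarith
    exact (Real.log_lt_log_iff (hpos y) (hpos 0)).1 this
  -- deriv T is strictly antitone on [0,∞)
  have hanti : StrictAntiOn (deriv T) (Set.Ici (0:ℝ)) := by
    intro x hx y hy hxy
    have hx0 : (0:ℝ) ≤ x := hx
    have hy0 : (0:ℝ) < y := lt_of_le_of_lt hx0 hxy
    have hne : -y ≠ y := by intro h; linarith [h]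
    have hlam : (0:ℝ) < (y - x) / (2 * y) := div_pos (by linarith) (by linarith)
    have hmu : (0:ℝ) < (y + x) / (2 * y) := div_pos (by linarith) (by linarith)
    have hsum : (y - x) / (2 * y) + (y + x) / (2 * y) = 1 := by
      field_simp; ring
    have h := hlc.2 (Set.mem_univ (-y)) (Set.mem_univ y) hne hlam hmu hsum
    simp only [smul_eq_mul] at h
    have e : (y - x) / (2 * y) * (-y) + (y + x) / (2 * y) * y = x := by
      field_simp; ring
    rw [e] at h
    rw [feven y] at h
    have e3 : (y - x) / (2 * y) * Real.log (deriv T y) +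
        (y + x) / (2 * y) * Real.log (deriv T y) =
        ((y - x) / (2 * y) + (y + x) / (2 * y)) * Real.log (deriv T y) := by ring
    rw [e3, hsum, one_mul] at h
    have hfx : Real.log (deriv T y) < Real.log (deriv T x) := h
    exact (Real.log_lt_log_iff (hpos y) (hpos x)).1 hfx
  -- (ii)
  have claim2 : StrictConcaveOn ℝ (Set.Ici (0:ℝ)) T := by
    apply StrictAntiOn.strictConcaveOn_of_deriv (convex_Ici 0)
      hdiff.continuous.continuousOn
    rw [interior_Ici]
    exact hanti.mono Set.Ioi_subset_Ici_self
  -- key log-concavity inequality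
  have key : ∀ x y b : ℝ, x < y → 0 < b →
      Real.log (deriv T (y + b)) + Real.log (deriv T x) <
        Real.log (deriv T (x + b)) + Real.log (deriv T y) := by
    intro x y b hxy hb
    have hd : (0:ℝ) < y + b - x := by linarith
    have hlam : (0:ℝ) < (y - x) / (y + b - x) := div_pos (by linarith) hd
    have hmu : (0:ℝ) < b / (y + b - x) := div_pos hb hd
    have hsum : (y - x) / (y + b - x) + b / (y + b - x) = 1 := by
      field_simp
      ring
    have hne : x ≠ y + b := by intro h; linarith [h]
    have h1 := hlc.2 (Set.mem_univ x) (Set.mem_univ (y + b)) hne hlam hmu hsum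
    have h2 := hlc.2 (Set.mem_univ x) (Set.mem_univ (y + b)) hne hmu hlam
      (by linarith [hsum])
    simp only [smul_eq_mul] at h1 h2
    have e1 : (y - x) / (y + b - x) * x + b / (y + b - x) * (y + b) = x + b := by
      field_simp; ring
    have e2 : b / (y + b - x) * x + (y - x) / (y + b - x) * (y + b) = y := by
      field_simp; ring
    rw [e1] at h1; rw [e2] at h2
    have e3 : (y - x) / (y + b - x) * Real.log (deriv T x) +
        b / (y + b - x) * Real.log (deriv T (y + b)) +
        (b / (y + b - x) * Real.log (deriv T x) +
        (y - x) / (y + b - x) * Real.log (deriv T (y + b))) =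
        ((y - x) / (y + b - x) + b / (y + b - x)) *
        (Real.log (deriv T x) + Real.log (deriv T (y + b))) := by ring
    rw [hsum, one_mul] at e3
    linarith
  -- (iii)
  have claim3 : ∀ b : ℝ, 0 < b → ∀ x x' : ℝ, x < x' →
      deriv T (x' + b) / deriv T x' < deriv T (x + b) / deriv T x := by
    intro b hb x x' hxx
    have h := key x x' b hxx hb
    rw [← Real.log_mul (ne_of_gt (hpos _)) (ne_of_gt (hpos _)),
      ← Real.log_mul (ne_of_gt (hpos _)) (ne_of_gt (hpos _))] at h
    have hm : deriv T (x' + b) * deriv T x < deriv T (x + b) * deriv T x' :=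
      (Real.log_lt_log_iff (mul_pos (hpos _) (hpos _)) (mul_pos (hpos _) (hpos _))).1 h
    rw [div_lt_div_iff₀ (hpos x') (hpos x)]
    exact hm
  refine ⟨claim1, claim2, claim3, ?_⟩
  -- (iv)
  intro θ a hθa ha0
  have hc : (0:ℝ) < a - θ := by linarith
  have hgA : (0:ℝ) < deriv T (-2 * a) := hpos _
  have hg0 : (0:ℝ) < deriv T 0 := hpos 0
  -- auxiliary function
  set h : ℝ → ℝ := fun y =>
    (T (y + -2 * a) - T (-2 * a)) / deriv T (-2 * a) - (T y - T 0) / deriv T 0 with hh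
  have hderiv : ∀ y : ℝ, HasDerivAt h
      (deriv T (y + -2 * a) / deriv T (-2 * a) - deriv T y / deriv T 0) y := by
    intro y
    have H1 : HasDerivAt (fun y => T (y + -2 * a)) (deriv T (y + -2 * a)) y :=
      HasDerivAt.comp_add_const y (-2 * a) (hdiff (y + -2 * a)).hasDerivAt
    exact ((H1.sub_const (T (-2 * a))).div_const _).sub
      (((hdiff y).hasDerivAt.sub_const (T 0)).div_const _)
  have hAnti : StrictAntiOn h (Set.Ici (0:ℝ)) := by
    apply strictAntiOn_of_deriv_neg (convex_Ici 0)
    · exact Continuous.continuousOn (by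
        have : Continuous T := hdiff.continuous
        fun_prop)
    · intro y hy
      rw [interior_Ici] at hy
      rw [(hderiv y).deriv]
      have h3 := claim3 y hy 0 (-2 * a) (by linarith)
      have e1 : -2 * a + y = y + -2 * a := by ring
      rw [e1, zero_add] at h3
      linarith
  have hmem1 : (0:ℝ) ∈ Set.Ici (0:ℝ) := Set.self_mem_Ici
  have hmem2 : (2 * a - 2 * θ) ∈ Set.Ici (0:ℝ) := by
    simp only [Set.mem_Ici]; linarith
  have hH := hAnti hmem1 hmem2 (by linarith)
  have h0 : h 0 = 0 := by
    simp [hh]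
  rw [h0] at hH
  have e2 : 2 * a - 2 * θ + -2 * a = -2 * θ := by ring
  simp only [hh, e2] at hH
  -- hH : (T (-2θ) - T (-2a)) / gA - (T (2a - 2θ) - T 0) / g0 < 0
  -- concavity midpoint
  have hmid : T 0 + T (2 * a - 2 * θ) < 2 * T (a - θ) := by
    have hne : (0:ℝ) ≠ 2 * a - 2 * θ := by intro hcon; linarith
    have hcv := claim2.2 (Set.self_mem_Ici) (Set.mem_Ici.2 (by linarith : (0:ℝ) ≤ 2 * a - 2 * θ))
      hne (show (0:ℝ) < 1/2 by norm_num) (show (0:ℝ) < 1/2 by norm_num)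
      (show (1:ℝ)/2 + 1/2 = 1 by norm_num)
    simp only [smul_eq_mul] at hcv
    have e : (1:ℝ)/2 * 0 + (1:ℝ)/2 * (2 * a - 2 * θ) = a - θ := by ring
    rw [e] at hcv
    linarith
  -- combine
  have hH' : (T (-2 * θ) - T (-2 * a)) * deriv T 0 <
      (T (2 * a - 2 * θ) - T 0) * deriv T (-2 * a) := by
    have : (T (-2 * θ) - T (-2 * a)) / deriv T (-2 * a) <
        (T (2 * a - 2 * θ) - T 0) / deriv T 0 := by linarith
    exact (div_lt_div_iff₀ hgA hg0).1 this
  rw [div_lt_div_iff₀ (mul_pos hgA (by linarith)) (mul_pos hg0 hc)]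
  nlinarith [mul_pos (sub_pos.2 hH') hc,
    mul_pos (mul_pos (sub_pos.2 (show T (2 * a - 2 * θ) - T 0 <
      2 * (T (a - θ) - T 0) by linarith)) hgA) hc]
end

section
/- Let T : ℝ → ℝ be odd and differentiable with T' > 0 strictly log-concave, and let a ∈ [−1,0), θ ∈ (a,0). Then T(−2a) > T(−2θ) + [2T'(−2a)/T'(0)]·T(θ−a). Equivalently, [T(−2a)−T(−2θ)]/[T'(−2a)(2θ−2a)] > [T(θ−a)−T(0)]/[T'(0)(θ−a)]. -/
/-- For odd `T` with strictly log-concave positive derivative, `a ∈ [−1,0)`, `θ ∈ (a,0)`: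
`T(−2a) > T(−2θ) + (2T'(−2a)/T'(0))·T(θ−a)`, equivalently the secant-slope comparison. -/
theorem stmt_15 (T : ℝ → ℝ) (hdiff : Differentiable ℝ T)
    (hodd : ∀ y, T (-y) = -T y)
    (hpos : ∀ y, 0 < deriv T y)
    (hlc : StrictConcaveOn ℝ Set.univ (fun y => Real.log (deriv T y)))
    (a θ : ℝ) (ha : a ∈ Set.Ico (-1:ℝ) 0) (hθ : θ ∈ Set.Ioo a 0) :
    T (-2 * θ) + 2 * deriv T (-2 * a) / deriv T 0 * T (θ - a) < T (-2 * a) ∧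
    (T (θ - a) - T 0) / (deriv T 0 * (θ - a)) <
      (T (-2 * a) - T (-2 * θ)) / (deriv T (-2 * a) * (2 * θ - 2 * a)) := by
  obtain ⟨ha1, ha0⟩ := ha
  obtain ⟨hθa, hθ0⟩ := hθ
  -- T 0 = 0
  have hT0 : T 0 = 0 := by have := hodd 0; simp at this; linarith
  -- deriv T is even
  have heven : ∀ y, deriv T (-y) = deriv T y := by
    intro y
    have h1 : deriv (fun x => T (-x)) y = -deriv T (-y) := by
      simpa using deriv_comp_neg T y
    have h2 : (fun x => T (-x)) = fun x => -(T x) := funext hodd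
    have h3 : deriv (fun x => -(T x)) y = -deriv T y := by
      simpa using deriv.neg (f := T) (x := y)
    rw [h2, h3] at h1
    linarith
  -- deriv T strictly decreasing on [0, ∞)
  have hdec : ∀ x y : ℝ, 0 ≤ x → x < y → deriv T y < deriv T x := by
    intro x y hx hxy
    have hy : 0 < y := lt_of_le_of_lt hx hxy
    set t : ℝ := (y - x) / (2 * y) with ht
    set s : ℝ := (x + y) / (2 * y) with hs
    have ht0 : 0 < t := div_pos (by linarith) (by linarith)
    have hs0 : 0 < s := by positivity
    have hts : t + s = 1 := by
      rw [ht, hs, ← add_div, div_eq_one_iff_eq (by linarith : (0:ℝ) < 2 * y).ne']; ring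
    have hne : (-y : ℝ) ≠ y := by intro h; linarith
    have hcomb : t • (-y) + s • y = x := by
      simp only [smul_eq_mul, ht, hs]; field_simp; ring
    have := hlc.2 (Set.mem_univ (-y)) (Set.mem_univ y) hne ht0 hs0 hts
    rw [hcomb] at this
    have hlog : Real.log (deriv T y) < Real.log (deriv T x) := by
      have h := heven y
      simp only [h] at this
      calc Real.log (deriv T y)
          = t * Real.log (deriv T y) + s * Real.log (deriv T y) := by
            rw [← add_mul, hts, one_mul]
        _ < Real.log (deriv T x) := by simpa [smul_eq_mul] using this
    exact (Real.log_lt_log_iff (hpos y) (hpos x)).mp hlog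
  -- MVT on [-2θ, -2a]
  have hlt1 : -2 * θ < -2 * a := by linarith
  obtain ⟨c, hc, hceq⟩ := exists_hasDerivAt_eq_slope T (deriv T) hlt1
    (hdiff.continuous.continuousOn)
    (fun x _ => (hdiff x).hasDerivAt)
  have hc1 : deriv T (-2 * a) < deriv T c :=
    hdec c (-2 * a) (by linarith [hc.1]) hc.2
  have hA : deriv T (-2 * a) * (2 * θ - 2 * a) < T (-2 * a) - T (-2 * θ) := by
    have hd : (0:ℝ) < -2 * a - -2 * θ := by linarith
    have := hceq
    rw [eq_div_iff (ne_of_gt hd)] at this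
    nlinarith [mul_lt_mul_of_pos_right hc1 hd]
  -- MVT on [0, θ - a]
  have hlt2 : (0:ℝ) < θ - a := by linarith
  obtain ⟨d, hd, hdeq⟩ := exists_hasDerivAt_eq_slope T (deriv T) hlt2
    (hdiff.continuous.continuousOn)
    (fun x _ => (hdiff x).hasDerivAt)
  have hd1 : deriv T d < deriv T 0 := hdec 0 d le_rfl hd.1
  have hB : T (θ - a) < deriv T 0 * (θ - a) := by
    rw [eq_div_iff (by intro h; simp at h; linarith : (θ - a - 0) ≠ 0)] at hdeq
    nlinarith [mul_lt_mul_of_pos_right hd1 hlt2]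
  have hg0 : 0 < deriv T 0 := hpos 0
  have hg2a : 0 < deriv T (-2 * a) := hpos _
  constructor
  · have hq : 2 * deriv T (-2 * a) / deriv T 0 * T (θ - a)
        < deriv T (-2 * a) * (2 * θ - 2 * a) := by
      rw [div_mul_eq_mul_div, div_lt_iff₀ hg0]
      nlinarith [mul_lt_mul_of_pos_left hB (by positivity : (0:ℝ) < 2 * deriv T (-2 * a))]
    linarith
  · have h1 : (T (θ - a) - T 0) / (deriv T 0 * (θ - a)) < 1 := by
      rw [div_lt_one (mul_pos hg0 hlt2)]
      rw [hT0]; linarith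
    have h2 : 1 < (T (-2 * a) - T (-2 * θ)) / (deriv T (-2 * a) * (2 * θ - 2 * a)) := by
      rw [lt_div_iff₀ (mul_pos hg2a (by linarith : (0:ℝ) < 2 * θ - 2 * a))]
      linarith
    linarith
end

section
/- Let κ ∈ (0,1) and let φ be a Borel probability measure with a density on [0,1]. Define t₁ : [ā,1] → [0,1] by κ·φ([0,t₁(a)]) = (1−κ)·φ([a,1]), where ā solves κ·φ([0,ā]) = (1−κ)·φ([ā,1]). Suppose π is the outcome with action-marginal α given by α([a,1]) = φ([a,1])/κ for a ∈ [ā,1], and conditional π_a = (1−κ)δ_{t₁(a)} + κδ_a. Then for any joint distribution π̃ on [0,1]² with θ-marginal φ whose conditional π̃_a satisfies π̃_a([a,1]) ≥ κ for α̃-almost every induced action a, the action-marginal α̃ of π̃ satisfies α̃([a,1]) ≤ φ([a,1])/κ for every a ∈ [0,1]. -/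
open MeasureTheory

/-- Quantile persuasion: any implementable joint distribution `π̃` on actions × states
(with state marginal `φ` and obedience `π̃_a([a,1]) ≥ κ`, stated in integrated form)
has action marginal bounded above by `φ([a,1])/κ`. -/
theorem stmt_17 (κ : ℝ) (hκ : κ ∈ Set.Ioo (0:ℝ) 1)
    (φ : Measure ℝ) [IsProbabilityMeasure φ] (hφsupp : φ (Set.Icc (0:ℝ) 1) = 1)
    (hac : φ ≪ MeasureTheory.volume)
    (π : Measure (ℝ × ℝ)) [IsProbabilityMeasure π]
    (hmarg : π.map Prod.snd = φ)
    (hobed : ∀ B : Set ℝ, MeasurableSet B →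
      ENNReal.ofReal κ * π {p : ℝ × ℝ | p.1 ∈ B} ≤ π {p : ℝ × ℝ | p.1 ∈ B ∧ p.1 ≤ p.2}) :
    ∀ a ∈ Set.Icc (0:ℝ) 1,
      π {p : ℝ × ℝ | p.1 ∈ Set.Icc a 1} ≤ φ (Set.Icc a 1) / ENNReal.ofReal κ := by
  intro a ha
  have h1 := hobed (Set.Icc a 1) measurableSet_Icc
  -- the obedience event implies p.2 ≥ a
  have hsub : {p : ℝ × ℝ | p.1 ∈ Set.Icc a 1 ∧ p.1 ≤ p.2} ⊆ Prod.snd ⁻¹' Set.Ici a := by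
    rintro p ⟨⟨hpa, _⟩, hle⟩
    exact hpa.trans hle
  have h2 : π {p : ℝ × ℝ | p.1 ∈ Set.Icc a 1 ∧ p.1 ≤ p.2} ≤ φ (Set.Ici a) := by
    calc π {p : ℝ × ℝ | p.1 ∈ Set.Icc a 1 ∧ p.1 ≤ p.2}
        ≤ π (Prod.snd ⁻¹' Set.Ici a) := measure_mono hsub
      _ = φ (Set.Ici a) := by
          rw [← hmarg, Measure.map_apply measurable_snd measurableSet_Ici]
  -- φ puts no mass above 1
  have hzero : φ (Set.Ioi (1:ℝ)) = 0 := by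
    have hcompl : φ (Set.Icc (0:ℝ) 1)ᶜ = 0 := by
      rw [measure_compl measurableSet_Icc (measure_ne_top _ _), hφsupp, measure_univ, tsub_self]
    exact measure_mono_null (fun x hx => by
      simp only [Set.mem_compl_iff, Set.mem_Icc, not_and_or, not_le]
      right; exact hx) hcompl
  have hIci : φ (Set.Ici a) ≤ φ (Set.Icc a 1) := by
    have : Set.Ici a ⊆ Set.Icc a 1 ∪ Set.Ioi 1 := by
      intro x hx
      by_cases hx1 : x ≤ 1
      · exact Or.inl ⟨hx, hx1⟩
      · exact Or.inr (lt_of_not_ge hx1)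
    calc φ (Set.Ici a) ≤ φ (Set.Icc a 1 ∪ Set.Ioi 1) := measure_mono this
      _ ≤ φ (Set.Icc a 1) + φ (Set.Ioi 1) := measure_union_le _ _
      _ = φ (Set.Icc a 1) := by rw [hzero, add_zero]
  have hmain : ENNReal.ofReal κ * π {p : ℝ × ℝ | p.1 ∈ Set.Icc a 1} ≤ φ (Set.Icc a 1) :=
    h1.trans (h2.trans hIci)
  rw [ENNReal.le_div_iff_mul_le (Or.inl (ne_of_gt (ENNReal.ofReal_pos.mpr hκ.1)))
    (Or.inl ENNReal.ofReal_ne_top)]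
  rw [mul_comm]
  exact hmain
end

section
/- Let θ₁ ∈ [1/e, 1] and θ₂ = 1/θ₁, and let a = θ₁/2 + 1/(2θ₁). Then with u(a,θ) = θ − a: (i) u(a,θ₂) = −u(a,θ₁), so the posterior (δ_{θ₁} + δ_{θ₂})/2 has mean a; (ii) with q(a) = a, the function θ ↦ a/θ + a(θ − a) on [1/e, e] is maximized at θ = θ₁ and θ = θ₂ (i.e., the dual constraint p(θ) ≥ V(a,θ) + q(a)u(a,θ) with p(θ) = max over matched a holds with equality exactly at the matched states). In particular, for every θ ∈ [1/e, e] and a ∈ [1, e/2 + 1/(2e)], a/θ + a(θ−a) ≤ (θ/2 + 1/(2θ))/θ + (θ/2 + 1/(2θ))·(θ − θ/2 − 1/(2θ)), with equality iff a = θ/2 + 1/(2θ). -/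
/-!
Since `a/θ + aθ = 2am` with `m = θ/2 + 1/(2θ)`, the objective `a/θ + a(θ - a)` equals
`m² - (a - m)²`: a downward parabola in `a` with vertex at `m`.
-/

theorem div_add_mul_sub_eq_sub_sq {K : Type*} [Field K] [CharZero K] (a θ : K) :
    a / θ + a * (θ - a) =
      (θ / 2 + 1 / (2 * θ)) / θ + (θ / 2 + 1 / (2 * θ)) * (θ - (θ / 2 + 1 / (2 * θ))) -
        (a - (θ / 2 + 1 / (2 * θ))) ^ 2 := by
  ring

theorem stmt_18_general (θ₁ : ℝ) :
    ((1 / θ₁ - (θ₁ / 2 + 1 / (2 * θ₁))) = -(θ₁ - (θ₁ / 2 + 1 / (2 * θ₁)))) ∧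
    (∀ θ ∈ Set.Icc (Real.exp 1)⁻¹ (Real.exp 1),
      ∀ a ∈ Set.Icc (1:ℝ) (Real.exp 1 / 2 + 1 / (2 * Real.exp 1)),
        a / θ + a * (θ - a) ≤
          (θ / 2 + 1 / (2 * θ)) / θ +
            (θ / 2 + 1 / (2 * θ)) * (θ - (θ / 2 + 1 / (2 * θ))) ∧
        (a / θ + a * (θ - a) =
            (θ / 2 + 1 / (2 * θ)) / θ +
              (θ / 2 + 1 / (2 * θ)) * (θ - (θ / 2 + 1 / (2 * θ))) ↔
          a = θ / 2 + 1 / (2 * θ))) := by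
  refine ⟨by ring, fun θ _ a _ => ?_⟩
  rw [div_add_mul_sub_eq_sub_sq a θ]
  exact ⟨sub_le_self _ (sq_nonneg _), by rw [sub_eq_self, sq_eq_zero_iff, sub_eq_zero]⟩

/-- Negative assortative matching example: with `u(a,θ) = θ − a`, pairing `θ₁` with
`1/θ₁` induces action `a = θ₁/2 + 1/(2θ₁)`; and for `q(a) = a`, the dual objective
`a/θ + a(θ − a)` is maximized over `a` exactly at `a = θ/2 + 1/(2θ)`. -/
theorem stmt_18 (θ₁ : ℝ) (hθ₁ : θ₁ ∈ Set.Icc (Real.exp 1)⁻¹ 1) :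
    ((1 / θ₁ - (θ₁ / 2 + 1 / (2 * θ₁))) = -(θ₁ - (θ₁ / 2 + 1 / (2 * θ₁)))) ∧
    (∀ θ ∈ Set.Icc (Real.exp 1)⁻¹ (Real.exp 1),
      ∀ a ∈ Set.Icc (1:ℝ) (Real.exp 1 / 2 + 1 / (2 * Real.exp 1)),
        a / θ + a * (θ - a) ≤
          (θ / 2 + 1 / (2 * θ)) / θ +
            (θ / 2 + 1 / (2 * θ)) * (θ - (θ / 2 + 1 / (2 * θ))) ∧
        (a / θ + a * (θ - a) =
            (θ / 2 + 1 / (2 * θ)) / θ +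
              (θ / 2 + 1 / (2 * θ)) * (θ - (θ / 2 + 1 / (2 * θ))) ↔
          a = θ / 2 + 1 / (2 * θ))) :=
  stmt_18_general θ₁
end

section
/- Let u, V : [0,1]×[0,1] → ℝ be continuous, V continuously differentiable in a with derivative v, u continuously differentiable in a with derivative u_a, and u_a(a,θ) < 0 whenever u(a,θ)=0. Define q̃(a,θ) = v(a,θ)/(−u_a(a,θ)) if u(a,θ)=0, and q̃(a,θ) = (V(a⋆(θ),θ) − V(a,θ))/u(a,θ) if u(a,θ)≠0, where a⋆(θ) is the unique maximizer of a ↦ U(a,θ) characterized by u(a⋆(θ),θ)=0 and a⋆ is continuous. Then q̃ is continuous on [0,1]², hence bounded. -/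
open Set

/-- Cauchy MVT product identity between `a` and a zero `b` of `u (·, θ)`. -/
lemma mvt_key (u ua V v : ℝ → ℝ → ℝ)
    (huderiv : ∀ a ∈ Set.Icc (0:ℝ) 1, ∀ θ ∈ Set.Icc (0:ℝ) 1,
      HasDerivAt (fun a' => u a' θ) (ua a θ) a)
    (hVderiv : ∀ a ∈ Set.Icc (0:ℝ) 1, ∀ θ ∈ Set.Icc (0:ℝ) 1,
      HasDerivAt (fun a' => V a' θ) (v a θ) a)
    {θ a b : ℝ} (hθ : θ ∈ Set.Icc (0:ℝ) 1) (ha : a ∈ Set.Icc (0:ℝ) 1)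
    (hb : b ∈ Set.Icc (0:ℝ) 1) (hub : u b θ = 0) (hab : a ≠ b) :
    ∃ c, c ∈ Set.Ioo (min a b) (max a b) ∧
      (V b θ - V a θ) * ua c θ = -(u a θ) * v c θ := by
  have hsub : ∀ p q : ℝ, p ∈ Set.Icc (0:ℝ) 1 → q ∈ Set.Icc (0:ℝ) 1 →
      Set.Icc p q ⊆ Set.Icc (0:ℝ) 1 := by
    intro p q hp hq x hx
    exact ⟨le_trans hp.1 hx.1, le_trans hx.2 hq.2⟩
  rcases lt_or_gt_of_ne hab with h | h
  · have hss := hsub a b ha hb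
    have hVc : ContinuousOn (fun x => V x θ) (Set.Icc a b) := fun x hx =>
      ((hVderiv x (hss hx) θ hθ).continuousAt).continuousWithinAt
    have huc : ContinuousOn (fun x => u x θ) (Set.Icc a b) := fun x hx =>
      ((huderiv x (hss hx) θ hθ).continuousAt).continuousWithinAt
    obtain ⟨c, hc, heq⟩ := exists_ratio_hasDerivAt_eq_ratio_slope
      (fun x => V x θ) (fun x => v x θ) h hVc
      (fun x hx => hVderiv x (hss (Set.Ioo_subset_Icc_self hx)) θ hθ)
      (fun x => u x θ) (fun x => ua x θ) huc
      (fun x hx => huderiv x (hss (Set.Ioo_subset_Icc_self hx)) θ hθ)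
    refine ⟨c, by simpa [min_eq_left h.le, max_eq_right h.le] using hc, ?_⟩
    simp only [hub] at heq
    linarith [heq]
  · have hss := hsub b a hb ha
    have hVc : ContinuousOn (fun x => V x θ) (Set.Icc b a) := fun x hx =>
      ((hVderiv x (hss hx) θ hθ).continuousAt).continuousWithinAt
    have huc : ContinuousOn (fun x => u x θ) (Set.Icc b a) := fun x hx =>
      ((huderiv x (hss hx) θ hθ).continuousAt).continuousWithinAt
    obtain ⟨c, hc, heq⟩ := exists_ratio_hasDerivAt_eq_ratio_slope
      (fun x => V x θ) (fun x => v x θ) h hVc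
      (fun x hx => hVderiv x (hss (Set.Ioo_subset_Icc_self hx)) θ hθ)
      (fun x => u x θ) (fun x => ua x θ) huc
      (fun x hx => huderiv x (hss (Set.Ioo_subset_Icc_self hx)) θ hθ)
    refine ⟨c, by simpa [min_eq_right h.le, max_eq_left h.le] using hc, ?_⟩
    simp only [hub] at heq
    linarith [heq]

/-- Boundedness of the dual multiplier: the function `q̃` defined piecewise from `v/(−u_a)`
on the zero set of `u` and from the payoff difference ratio off it is continuous on
`[0,1]²`, hence bounded. -/
theorem stmt_19 (u ua V v : ℝ → ℝ → ℝ)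
    (hu : Continuous fun p : ℝ × ℝ => u p.1 p.2)
    (hua : Continuous fun p : ℝ × ℝ => ua p.1 p.2)
    (hV : Continuous fun p : ℝ × ℝ => V p.1 p.2)
    (hv : Continuous fun p : ℝ × ℝ => v p.1 p.2)
    (huderiv : ∀ a ∈ Set.Icc (0:ℝ) 1, ∀ θ ∈ Set.Icc (0:ℝ) 1,
      HasDerivAt (fun a' => u a' θ) (ua a θ) a)
    (hVderiv : ∀ a ∈ Set.Icc (0:ℝ) 1, ∀ θ ∈ Set.Icc (0:ℝ) 1,
      HasDerivAt (fun a' => V a' θ) (v a θ) a)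
    (hneg : ∀ a ∈ Set.Icc (0:ℝ) 1, ∀ θ ∈ Set.Icc (0:ℝ) 1, u a θ = 0 → ua a θ < 0)
    (astar : ℝ → ℝ) (hastarcont : Continuous astar)
    (hastarmem : ∀ θ ∈ Set.Icc (0:ℝ) 1, astar θ ∈ Set.Icc (0:ℝ) 1)
    (hastarzero : ∀ θ ∈ Set.Icc (0:ℝ) 1, u (astar θ) θ = 0)
    (hastaruniq : ∀ θ ∈ Set.Icc (0:ℝ) 1, ∀ a ∈ Set.Icc (0:ℝ) 1, u a θ = 0 → a = astar θ) :
    ContinuousOn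
      (fun p : ℝ × ℝ =>
        if u p.1 p.2 = 0 then v p.1 p.2 / (-ua p.1 p.2)
        else (V (astar p.2) p.2 - V p.1 p.2) / u p.1 p.2)
      (Set.Icc (0:ℝ) 1 ×ˢ Set.Icc (0:ℝ) 1) ∧
    ∃ C : ℝ, ∀ p ∈ Set.Icc (0:ℝ) 1 ×ˢ Set.Icc (0:ℝ) 1,
      |(fun p : ℝ × ℝ =>
        if u p.1 p.2 = 0 then v p.1 p.2 / (-ua p.1 p.2)
        else (V (astar p.2) p.2 - V p.1 p.2) / u p.1 p.2) p| ≤ C := by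
  set f : ℝ × ℝ → ℝ := fun p =>
    if u p.1 p.2 = 0 then v p.1 p.2 / (-ua p.1 p.2)
    else (V (astar p.2) p.2 - V p.1 p.2) / u p.1 p.2 with hf
  set S : Set (ℝ × ℝ) := Set.Icc (0:ℝ) 1 ×ˢ Set.Icc (0:ℝ) 1 with hS
  set F : ℝ × ℝ → ℝ := fun q => v q.1 q.2 / (-ua q.1 q.2) with hF
  have hcont : ContinuousOn f S := by
    intro p hp
    obtain ⟨hp1, hp2⟩ := hp
    by_cases hzero : u p.1 p.2 = 0
    · -- the hard case: use MVT
      have ha0 : p.1 = astar p.2 := hastaruniq p.2 hp2 p.1 hp1 hzero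
      have hneg0 : ua p.1 p.2 < 0 := hneg p.1 hp1 p.2 hp2 hzero
      rw [Metric.continuousWithinAt_iff]
      intro ε hε
      -- F is continuous at p
      have hFcont : ContinuousAt F p := by
        apply ContinuousAt.div hv.continuousAt (hua.continuousAt.neg)
        simpa using hneg0.ne
      obtain ⟨δ1, hδ1, hball1⟩ := Metric.continuousAt_iff.1 hFcont ε hε
      -- ua < 0 on a small ball
      have hopen : IsOpen {q : ℝ × ℝ | ua q.1 q.2 < 0} := isOpen_lt hua continuous_const
      obtain ⟨δ2, hδ2, hball2⟩ := Metric.isOpen_iff.1 hopen p hneg0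
      set r : ℝ := min δ1 δ2 with hr
      have hrpos : 0 < r := lt_min hδ1 hδ2
      -- astar is continuous at p.2
      obtain ⟨δ3, hδ3, hball3⟩ :=
        Metric.continuousAt_iff.1 hastarcont.continuousAt r hrpos
      refine ⟨min r δ3, lt_min hrpos hδ3, ?_⟩
      intro x hx hdist
      obtain ⟨hx1, hx2⟩ := hx
      rw [Prod.dist_eq] at hdist
      have hd1 : dist x.1 p.1 < r :=
        lt_of_le_of_lt (le_max_left _ _) (hdist.trans_le (min_le_left _ _))
      have hd2 : dist x.2 p.2 < δ3 :=
        lt_of_le_of_lt (le_max_right _ _) (hdist.trans_le (min_le_right _ _))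
      have hd2r : dist x.2 p.2 < r :=
        lt_of_le_of_lt (le_max_right _ _) (hdist.trans_le (min_le_left _ _))
      have hda : dist (astar x.2) p.1 < r := by rw [ha0]; exact hball3 hd2
      -- f p = F p
      have hfp : f p = F p := by simp [hf, hzero, hF]
      by_cases hx0 : u x.1 x.2 = 0
      · have : f x = F x := by simp [hf, hx0, hF]
        rw [this, hfp]
        exact hball1 (by
          rw [Prod.dist_eq]
          calc max (dist x.1 p.1) (dist x.2 p.2) < r := max_lt hd1 hd2r
            _ ≤ δ1 := min_le_left _ _)
      · have hne : x.1 ≠ astar x.2 := fun h => hx0 (h ▸ hastarzero x.2 hx2)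
        obtain ⟨c, hc, heq⟩ := mvt_key u ua V v huderiv hVderiv hx2 hx1
          (hastarmem x.2 hx2) (hastarzero x.2 hx2) hne
        -- c is within r of p.1
        have hcd : dist c p.1 < r := by
          rw [Real.dist_eq, abs_lt]
          rw [Real.dist_eq, abs_lt] at hd1 hda
          constructor
          · have : min x.1 (astar x.2) > p.1 - r := lt_min (by linarith [hd1.1]) (by linarith [hda.1])
            linarith [hc.1]
          · have : max x.1 (astar x.2) < p.1 + r := max_lt (by linarith [hd1.2]) (by linarith [hda.2])
            linarith [hc.2]
        have hdistc : dist (c, x.2) p < r := by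
          rw [Prod.dist_eq]
          exact max_lt hcd hd2r
        have huac : ua c x.2 < 0 := hball2 (hdistc.trans_le (min_le_right _ _))
        -- f x = F (c, x.2)
        have hfx : f x = F (c, x.2) := by
          simp only [hf, hF, if_neg hx0]
          rw [div_eq_div_iff hx0 (by simpa using huac.ne)]
          linear_combination -heq
        rw [hfx, hfp]
        exact hball1 (hdistc.trans_le (min_le_left _ _))
    · -- easy case: u ≠ 0 near p
      have hopen : IsOpen {q : ℝ × ℝ | u q.1 q.2 ≠ 0} := isOpen_ne_fun hu continuous_const
      have hmem : p ∈ {q : ℝ × ℝ | u q.1 q.2 ≠ 0} := hzero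
      have heq : f =ᶠ[nhds p] fun q => (V (astar q.2) q.2 - V q.1 q.2) / u q.1 q.2 := by
        filter_upwards [hopen.mem_nhds hmem] with q hq
        simp [hf, hq]
      have hca : ContinuousAt (fun q : ℝ × ℝ => (V (astar q.2) q.2 - V q.1 q.2) / u q.1 q.2) p := by
        apply ContinuousAt.div
        · exact ((hV.comp ((hastarcont.comp continuous_snd).prodMk continuous_snd)).sub hV).continuousAt
        · exact hu.continuousAt
        · exact hzero
      exact (hca.congr heq.symm).continuousWithinAt
  refine ⟨hcont, ?_⟩
  obtain ⟨C, hC⟩ := (isCompact_Icc.prod isCompact_Icc).exists_bound_of_continuousOn hcont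
  exact ⟨C, fun p hp => by simpa [Real.norm_eq_abs] using hC p hp⟩
end
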